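/- Let P be an anti-self-polar polytope of dimension d + 1. Then f₀d(P) = 2·e(G(P)), where e(G(P)) is the number of edges of the diameter graph G(P). In particular, if (v, w) is a pair of vertices of P at maximal distance, then w is a vertex of the facet of P opposite v, and each such pair is counted twice in f₀d(P). -/

import Mathlib

open scoped RealInnerProductSpace Pointwise

variable {E : Type*} [NormedAddCommGroup E] [InnerProductSpace ℝ E]

/-- A (convex) polytope: the convex hull of a finite set. -/
def IsPolytope (P : Set E) : Prop := ∃ S : Finset E, P = convexHull ℝ (S : Set E)

/-- The polar of a set with respect to the unit sphere. -/
def polarSet (P : Set E) : Set E := {y | ∀ x ∈ P, (inner ℝ x y : ℝ) ≤ 1}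

/-- The dimension of a set: the rank of the direction of its affine span. -/
noncomputable def affDim (F : Set E) : ℕ := Module.finrank ℝ (affineSpan ℝ F).direction

/-- `F` is a nonempty (exposed) face of `P` of dimension `i`. -/
def IsFaceOfDim (P F : Set E) (i : ℕ) : Prop :=
  IsExposed ℝ P F ∧ F.Nonempty ∧ affDim F = i

/-- `fVec P i` is the number of `i`-dimensional faces of `P`. -/
noncomputable def fVec (P : Set E) (i : ℕ) : ℕ := {F : Set E | IsFaceOfDim P F i}.ncard

/-- `fPair P i j` is the number of pairs `x ⊆ y` with `x` an `i`-face and `y` a `j`-face. -/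
noncomputable def fPair (P : Set E) (i j : ℕ) : ℕ :=
  {p : Set E × Set E | IsFaceOfDim P p.1 i ∧ IsFaceOfDim P p.2 j ∧ p.1 ⊆ p.2}.ncard

/-- Anti-self-polar: inscribed in the unit sphere and `P* = -c • P` for some `c > 0`. -/
def IsAntiSelfPolar (P : Set E) : Prop :=
  (∀ v ∈ Set.extremePoints ℝ P, ‖v‖ = 1) ∧ ∃ c : ℝ, 0 < c ∧ polarSet P = (-c) • P

/-- The edge set of the diameter graph of `P`: unordered pairs of vertices of `P`
at maximal (= diameter) Euclidean distance. -/
def diamEdges (P : Set E) : Set (Set E) :=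
  {e | ∃ v w, v ∈ Set.extremePoints ℝ P ∧ w ∈ Set.extremePoints ℝ P ∧ v ≠ w ∧
    dist v w = Metric.diam P ∧ e = {v, w}}

/-- `aGon P j` is the number of 2-dimensional faces of `P` that are `j`-gons. -/
noncomputable def aGon (P : Set E) (j : ℕ) : ℕ :=
  {F : Set E | IsFaceOfDim P F 2 ∧ (Set.extremePoints ℝ F).ncard = j}.ncard

/-- The sum `a⁴(P) + 2·a⁵(P) + 3·a⁶(P) + ⋯`. -/
noncomputable def excessSum (P : Set E) : ℕ := ∑ᶠ j : ℕ, (j - 3) * aGon P j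

/-- The gap `g₂(P)` in Kalai's inequality. -/
noncomputable def g2 (P : Set E) : ℤ :=
  (excessSum P : ℤ) - (4 * (fVec P 0 : ℤ) - (fVec P 1 : ℤ) - 10)

/-!
Write `V` for the vertex set of `P`. Anti-self-polarity gives `-c⁻¹ ≤ ⟪x, y⟫` for `x, y ∈ P`, and
conversely `P = {x | ∀ w ∈ V, -c⁻¹ ≤ ⟪w, x⟫}`; as `P` lies in the unit ball, it contains
`closedBall 0 c⁻¹`. The facets of `P` are therefore the sets `{x ∈ P | ⟪v, x⟫ = -c⁻¹}`, `v ∈ V`: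
each has dimension `d`, because near `-c⁻¹ • v` all the other inequalities are strict; conversely,
an exposing functional of a proper face, rescaled into `P* = -c • P`, is `-c • q` with `q ∈ P`, and
some vertex of a convex combination for `q` gives a facet containing the face. A vertex `w` lies on
the facet of `v` iff `⟪v, w⟫ = -c⁻¹`, iff `‖v - w‖² = 2 + 2 * c⁻¹ = diam P ^ 2`. So the
vertex-facet incidences are the ordered diametral pairs of vertices, and each edge of the diameter
graph is counted twice.
-/

open Set Metric Module Filter Topology

theorem ncard_setOf_rel_eq_two_mul_ncard_pairs {α : Type*} {r : α → α → Prop}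
    (hsymm : ∀ a b, r a b → r b a) (hirrefl : ∀ a, ¬r a a) (hfin : {p : α × α | r p.1 p.2}.Finite) :
    {p : α × α | r p.1 p.2}.ncard = 2 * {e : Set α | ∃ a b, r a b ∧ e = {a, b}}.ncard := by
  classical
  set S := hfin.toFinset
  have hedges : {e : Set α | ∃ a b, r a b ∧ e = {a, b}} =
      ↑(S.image fun p => ({p.1, p.2} : Set α)) := by
    ext e
    simp [S, eq_comm]
  have hfiber : ∀ e ∈ S.image (fun p => ({p.1, p.2} : Set α)),
      (S.filter fun p => ({p.1, p.2} : Set α) = e).card = 2 := by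
    simp only [Finset.mem_image, Set.Finite.mem_toFinset, S]
    rintro _ ⟨⟨a, b⟩, hab, rfl⟩
    have hfilter : (S.filter fun p => ({p.1, p.2} : Set α) = {a, b}) = {(a, b), (b, a)} := by
      ext ⟨x, y⟩
      simp only [S, Finset.mem_filter, Set.Finite.mem_toFinset, Set.mem_ofPred_eq,
        Set.pair_eq_pair_iff, Finset.mem_insert, Finset.mem_singleton, Prod.mk.injEq]
      constructor
      · exact And.right
      · rintro (⟨rfl, rfl⟩ | ⟨rfl, rfl⟩)
        exacts [⟨hab, Or.inl ⟨rfl, rfl⟩⟩, ⟨hsymm _ _ hab, Or.inr ⟨rfl, rfl⟩⟩]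
    rw [hfilter, Finset.card_pair]
    simpa using fun h : a = b => absurd (h ▸ hab) (hirrefl b)
  rw [hedges, Set.ncard_coe_finset, ← hfin.coe_toFinset, Set.ncard_coe_finset,
    Finset.card_eq_sum_card_image (fun p => ({p.1, p.2} : Set α)) S,
    Finset.sum_const_nat hfiber, mul_comm]

theorem fPair_zero_eq_ncard {P V : Set E} {j : ℕ} {f : E → Set E}
    (h0 : {F | IsFaceOfDim P F 0} = (fun v => {v}) '' V) (hj : {F | IsFaceOfDim P F j} = f '' V)
    (hf : InjOn f V) :
    fPair P 0 j = {q : E × E | q.1 ∈ V ∧ q.2 ∈ V ∧ q.1 ∈ f q.2}.ncard := by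
  have hpairs : {p : Set E × Set E | IsFaceOfDim P p.1 0 ∧ IsFaceOfDim P p.2 j ∧ p.1 ⊆ p.2} =
      (fun q : E × E => (({q.1} : Set E), f q.2)) ''
        {q : E × E | q.1 ∈ V ∧ q.2 ∈ V ∧ q.1 ∈ f q.2} := by
    ext ⟨F, G⟩
    constructor
    · rintro ⟨hF, hG, hFG⟩
      obtain ⟨v, hv, rfl⟩ : F ∈ (fun v => ({v} : Set E)) '' V := h0 ▸ hF
      obtain ⟨w, hw, rfl⟩ : G ∈ f '' V := hj ▸ hG
      exact ⟨(v, w), ⟨hv, hw, hFG rfl⟩, rfl⟩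
    · rintro ⟨⟨v, w⟩, ⟨hv, hw, hvw⟩, hvwFG⟩
      obtain ⟨rfl, rfl⟩ := Prod.ext_iff.1 hvwFG
      refine ⟨?_, ?_, singleton_subset_iff.2 hvw⟩
      · exact (h0 ▸ mem_image_of_mem _ hv : {v} ∈ {F | IsFaceOfDim P F 0})
      · exact (hj ▸ mem_image_of_mem f hw : f w ∈ {F | IsFaceOfDim P F j})
  rw [fPair, hpairs, InjOn.ncard_image]
  rintro ⟨v, w⟩ ⟨-, hw, -⟩ ⟨v', w'⟩ ⟨-, hw', -⟩ h
  obtain ⟨hvv', hww'⟩ := Prod.ext_iff.1 h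
  exact Prod.ext (singleton_eq_singleton_iff.1 hvv') (hf hw hw' hww')

theorem IsExposed.inter_affineSpan_subset {A F : Set E} (hF : IsExposed ℝ A F)
    (hne : F.Nonempty) : A ∩ affineSpan ℝ F ⊆ F := by
  obtain ⟨l, hl⟩ := hF hne
  obtain ⟨x₀, hx₀⟩ := hne
  have hmax : ∀ x ∈ F, ∀ y ∈ A, l y ≤ l x := fun x hx => by
    rw [hl] at hx; exact hx.2
  have hconst : ∀ x ∈ F, l x = l x₀ := fun x hx =>
    le_antisymm (hmax x₀ hx₀ x (hF.subset hx)) (hmax x hx x₀ (hF.subset hx₀))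
  have hker : vectorSpan ℝ F ≤ LinearMap.ker (l : E →ₗ[ℝ] ℝ) := by
    rw [vectorSpan_def, Submodule.span_le]
    rintro _ ⟨y, hy, z, hz, rfl⟩
    simp [hconst y hy, hconst z hz]
  rintro x ⟨hxA, hx⟩
  have hlx : l x = l x₀ := by
    have hdir : x -ᵥ x₀ ∈ vectorSpan ℝ F := by
      rw [← direction_affineSpan]
      exact AffineSubspace.vsub_mem_direction hx (subset_affineSpan ℝ F hx₀)
    simpa [sub_eq_zero] using hker hdir
  rw [hl]
  exact ⟨hxA, fun y hy => hlx ▸ hmax x₀ hx₀ y hy⟩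

theorem IsExposed.eq_of_subset_of_affDim_eq [FiniteDimensional ℝ E] {A F G : Set E}
    (hF : IsExposed ℝ A F) (hne : F.Nonempty) (hFG : F ⊆ G) (hGA : G ⊆ A)
    (hdim : affDim F = affDim G) : F = G := by
  have hle : affineSpan ℝ F ≤ affineSpan ℝ G := affineSpan_mono ℝ hFG
  have hspan : affineSpan ℝ F = affineSpan ℝ G :=
    AffineSubspace.eq_of_direction_eq_of_nonempty_of_le
      (Submodule.eq_of_le_of_finrank_eq (AffineSubspace.direction_le hle) hdim)
      ((affineSpan_nonempty ℝ).2 hne) hle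
  exact hFG.antisymm fun x hx =>
    hF.inter_affineSpan_subset hne ⟨hGA hx, hspan ▸ subset_affineSpan ℝ G hx⟩

theorem exists_forall_inner_eq_of_mem_convexHull {V F : Set E} {q : E} {a : ℝ}
    (hq : q ∈ convexHull ℝ V) (hle : ∀ w ∈ V, ∀ x ∈ F, a ≤ ⟪w, x⟫)
    (heq : ∀ x ∈ F, ⟪q, x⟫ = a) : ∃ w ∈ V, ∀ x ∈ F, ⟪w, x⟫ = a := by
  rw [convexHull_eq_union_convexHull_finite_subsets] at hq
  obtain ⟨t, htV, hqt⟩ := mem_iUnion₂.1 hq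
  obtain ⟨μ, hμ0, hμ1, rfl⟩ := Finset.mem_convexHull'.1 hqt
  obtain ⟨w, hwt, hμw⟩ : ∃ w ∈ t, 0 < μ w :=
    Finset.exists_lt_of_sum_lt (by simp [hμ1] : ∑ y ∈ t, (0 : ℝ) < ∑ y ∈ t, μ y)
  refine ⟨w, htV hwt, fun x hx => ?_⟩
  have hsum : ∑ y ∈ t, μ y * (⟪y, x⟫ - a) = 0 := by
    simp only [mul_sub, Finset.sum_sub_distrib, ← Finset.sum_mul, hμ1, one_mul]
    rw [← heq x hx, sum_inner]
    simp [real_inner_smul_left]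
  have hterm := (Finset.sum_eq_zero_iff_of_nonneg fun y hy =>
    mul_nonneg (hμ0 y hy) (sub_nonneg.2 (hle y (htV hy) x hx))).1 hsum w hwt
  rcases mul_eq_zero.1 hterm with h | h
  · exact absurd h hμw.ne'
  · linarith

theorem isExposed_singleton_of_norm_eq_one {P : Set E} {v : E} (hball : P ⊆ closedBall 0 1)
    (hv : v ∈ P) (hv1 : ‖v‖ = 1) : IsExposed ℝ P {v} := by
  have hle : ∀ y ∈ P, ⟪v, y⟫ ≤ ‖y‖ := fun y _ => by
    simpa [hv1] using real_inner_le_norm v y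
  refine fun _ => ⟨innerSL ℝ v, ?_⟩
  ext x
  simp only [mem_singleton_iff, mem_ofPred_eq, innerSL_apply_apply]
  constructor
  · rintro rfl
    refine ⟨hv, fun y hy => ?_⟩
    rw [real_inner_self_eq_norm_sq, hv1, one_pow]
    exact (hle y hy).trans (by simpa using hball hy)
  · rintro ⟨hx, hmax⟩
    have hx1 : ‖x‖ ≤ 1 := by simpa using hball hx
    have hvv : ⟪v, v⟫ = 1 := by rw [real_inner_self_eq_norm_sq, hv1, one_pow]
    have hvx := hmax v hv
    have hxn : ‖x‖ = 1 := le_antisymm hx1 (by linarith [hle x hx])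
    exact ((inner_eq_one_iff_of_norm_eq_one (𝕜 := ℝ) hv1 hxn).1 (by linarith [hle x hx])).symm

theorem setOf_isFaceOfDim_zero [FiniteDimensional ℝ E] {P : Set E} (hball : P ⊆ closedBall 0 1)
    (hext : ∀ v ∈ extremePoints ℝ P, ‖v‖ = 1) :
    {F | IsFaceOfDim P F 0} = (fun v => {v}) '' extremePoints ℝ P := by
  ext F
  constructor
  · rintro ⟨hF, ⟨x, hx⟩, hdim⟩
    have hsub : F.Subsingleton := by
      rw [affDim, direction_affineSpan, Submodule.finrank_eq_zero] at hdim
      exact (vectorSpan_eq_bot_iff_subsingleton ℝ).1 hdim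
    obtain rfl := hsub.eq_singleton_of_mem hx
    exact ⟨x, hF.isExtreme.mem_extremePoints, rfl⟩
  · rintro ⟨v, hv, rfl⟩
    exact ⟨isExposed_singleton_of_norm_eq_one hball hv.1 (hext v hv), singleton_nonempty v,
      by simp [affDim, direction_affineSpan]⟩

theorem IsPolytope.finite_extremePoints {P : Set E} (h : IsPolytope P) :
    (extremePoints ℝ P).Finite := by
  obtain ⟨S, rfl⟩ := h
  exact S.finite_toSet.subset extremePoints_convexHull_subset

theorem IsPolytope.convexHull_extremePoints {P : Set E} (h : IsPolytope P) :
    convexHull ℝ (extremePoints ℝ P) = P := by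
  have hclosed := (h.finite_extremePoints.isCompact_convexHull ℝ).isClosed
  obtain ⟨S, hS⟩ := h
  have hcpt : IsCompact P := by rw [hS]; exact S.finite_toSet.isCompact_convexHull ℝ
  have hconv : Convex ℝ P := by rw [hS]; exact convex_convexHull ℝ _
  rw [← hclosed.closure_eq, closure_convexHull_extremePoints hcpt hconv]

theorem convexHull_subset_closedBall_one {V : Set E} (hV1 : ∀ v ∈ V, ‖v‖ = 1) :
    convexHull ℝ V ⊆ closedBall 0 1 :=
  convexHull_min (fun v hv => by simp [hV1 v hv]) (convex_closedBall 0 1)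

theorem dist_eq_sqrt_of_norm_eq_one {v w : E} (hv : ‖v‖ = 1) (hw : ‖w‖ = 1) :
    dist v w = √(2 - 2 * ⟪v, w⟫) := by
  rw [dist_eq_norm, ← Real.sqrt_sq (norm_nonneg _), norm_sub_sq_real, hv, hw]
  ring_nf

section AntiSelfPolar

variable {P V : Set E} {c : ℝ}

theorem neg_inv_le_inner_of_polarSet_eq (hc : 0 < c) (hP : polarSet P = (-c) • P) {x y : E}
    (hx : x ∈ P) (hy : y ∈ P) : -c⁻¹ ≤ ⟪x, y⟫ := by
  have hpol : (-c) • y ∈ polarSet P := hP ▸ smul_mem_smul_set hy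
  have h := hpol x hx
  rw [real_inner_smul_right] at h
  rw [neg_le, inv_eq_one_div, le_div_iff₀ hc]
  linarith

theorem mem_of_forall_neg_inv_le_inner (hc : 0 < c) (hP : polarSet P = (-c) • P) {x : E}
    (hx : ∀ z ∈ P, -c⁻¹ ≤ ⟪z, x⟫) : x ∈ P := by
  have hpol : (-c) • x ∈ polarSet P := fun z hz => by
    have h := hx z hz
    rw [neg_le, inv_eq_one_div, le_div_iff₀ hc] at h
    rw [real_inner_smul_right]
    linarith
  rwa [hP, smul_mem_smul_set_iff₀ (neg_ne_zero.2 hc.ne')] at hpol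

theorem closedBall_inv_subset_of_polarSet_eq (hc : 0 < c) (hP : polarSet P = (-c) • P)
    (hball : P ⊆ closedBall 0 1) : closedBall (0 : E) c⁻¹ ⊆ P := by
  intro y hy
  refine mem_of_forall_neg_inv_le_inner hc hP fun z hz => ?_
  have hzy : ‖z‖ * ‖y‖ ≤ 1 * c⁻¹ :=
    mul_le_mul (by simpa using hball hz) (by simpa using hy) (norm_nonneg y) zero_le_one
  linarith [neg_abs_le ⟪z, y⟫, abs_real_inner_le_norm z y]

theorem mem_iff_forall_neg_inv_le_inner (hc : 0 < c) (hP : polarSet P = (-c) • P)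
    (hPV : P = convexHull ℝ V) {x : E} : x ∈ P ↔ ∀ w ∈ V, -c⁻¹ ≤ ⟪w, x⟫ := by
  refine ⟨fun hx w hw => neg_inv_le_inner_of_polarSet_eq hc hP (hPV ▸ subset_convexHull ℝ V hw) hx,
    fun hx => mem_of_forall_neg_inv_le_inner hc hP fun z hz => ?_⟩
  rw [hPV] at hz
  have hhalf : Convex ℝ {z : E | -c⁻¹ ≤ ⟪x, z⟫} :=
    convex_halfSpace_ge (innerSL ℝ x).toLinearMap.isLinear _
  rw [real_inner_comm]
  exact convexHull_min (fun w hw => by simpa [real_inner_comm] using hx w hw) hhalf hz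

variable (P c) in
def oppositeFacet (v : E) : Set E := {x ∈ P | ⟪v, x⟫ = -c⁻¹}

theorem neg_inv_smul_mem_oppositeFacet (hc : 0 < c) (hP : polarSet P = (-c) • P)
    (hball : P ⊆ closedBall 0 1) {v : E} (hv1 : ‖v‖ = 1) : -c⁻¹ • v ∈ oppositeFacet P c v := by
  refine ⟨closedBall_inv_subset_of_polarSet_eq hc hP hball ?_, ?_⟩
  · simp [norm_smul, hv1, abs_of_pos hc]
  · rw [real_inner_smul_right, real_inner_self_eq_norm_sq, hv1]
    ring

theorem isExposed_oppositeFacet (hc : 0 < c) (hP : polarSet P = (-c) • P)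
    (hball : P ⊆ closedBall 0 1) {v : E} (hv : v ∈ P) (hv1 : ‖v‖ = 1) :
    IsExposed ℝ P (oppositeFacet P c v) := by
  have hp := neg_inv_smul_mem_oppositeFacet hc hP hball hv1
  have hge : ∀ y ∈ P, -c⁻¹ ≤ ⟪v, y⟫ := fun y hy => neg_inv_le_inner_of_polarSet_eq hc hP hv hy
  refine fun _ => ⟨-innerSL ℝ v, ?_⟩
  ext x
  simp only [oppositeFacet, mem_ofPred_eq, neg_apply, innerSL_apply_apply,
    neg_le_neg_iff]
  constructor
  · rintro ⟨hx, hxv⟩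
    exact ⟨hx, fun y hy => hxv ▸ hge y hy⟩
  · rintro ⟨hx, hmin⟩
    exact ⟨hx, le_antisymm (hp.2 ▸ hmin _ hp.1) (hge x hx)⟩

theorem exists_extremePoint_mem_oppositeFacet (hc : 0 < c) (hP : polarSet P = (-c) • P)
    (hball : P ⊆ closedBall 0 1) (hcpt : IsCompact P) {v : E} (hv : v ∈ P) (hv1 : ‖v‖ = 1) :
    ∃ w ∈ extremePoints ℝ P, w ∈ oppositeFacet P c v := by
  have hF := isExposed_oppositeFacet hc hP hball hv hv1
  obtain ⟨w, hw⟩ := (hF.isCompact hcpt).extremePoints_nonempty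
    ⟨_, neg_inv_smul_mem_oppositeFacet hc hP hball hv1⟩
  exact ⟨w, hF.isExtreme.extremePoints_subset_extremePoints hw, hw.1⟩

theorem vectorSpan_oppositeFacet (hc : 0 < c) (hP : polarSet P = (-c) • P)
    (hPV : P = convexHull ℝ V) (hV : V.Finite) (hV1 : ∀ v ∈ V, ‖v‖ = 1) {v : E} (hv : v ∈ V) :
    vectorSpan ℝ (oppositeFacet P c v) = (ℝ ∙ v)ᗮ := by
  have hp := neg_inv_smul_mem_oppositeFacet hc hP (hPV ▸ convexHull_subset_closedBall_one hV1)
    (hV1 v hv)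
  refine le_antisymm ?_ fun e he => ?_
  · rw [vectorSpan_def, Submodule.span_le]
    rintro _ ⟨x, hx, y, hy, rfl⟩
    simp [Submodule.mem_orthogonal_singleton_iff_inner_right, inner_sub_right, hx.2, hy.2]
  rw [Submodule.mem_orthogonal_singleton_iff_inner_right] at he
  set U := ⋂ w ∈ V \ {v}, {x : E | -c⁻¹ < ⟪w, x⟫}
  have hU : IsOpen U := hV.sdiff.isOpen_biInter fun w _ =>
    isOpen_lt continuous_const (continuous_const.inner continuous_id)
  have hpU : -c⁻¹ • v ∈ U := mem_iInter₂.2 fun w ⟨hw, hwv⟩ => by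
    have hwv1 : ⟪w, v⟫ < 1 :=
      (inner_lt_one_iff_real_of_norm_eq_one (hV1 w hw) (hV1 v hv)).2 hwv
    rw [mem_ofPred_eq, real_inner_smul_right]
    nlinarith [inv_pos.2 hc]
  have hUF : ∀ x ∈ U, ⟪v, x⟫ = -c⁻¹ → x ∈ oppositeFacet P c v := fun x hxU hxv => by
    refine ⟨(mem_iff_forall_neg_inv_le_inner hc hP hPV).2 fun w hw => ?_, hxv⟩
    rcases eq_or_ne w v with rfl | hwv
    · exact hxv.ge
    · exact (mem_iInter₂.1 hxU w ⟨hw, hwv⟩).le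
  have hline : Tendsto (fun t : ℝ => -c⁻¹ • v + t • e) (𝓝 0) (𝓝 (-c⁻¹ • v)) :=
    (by fun_prop : Continuous fun t : ℝ => -c⁻¹ • v + t • e).tendsto' 0 _ (by simp)
  have hev : ∀ᶠ t in 𝓝[≠] (0 : ℝ), -c⁻¹ • v + t • e ∈ U :=
    nhdsWithin_le_nhds (hline.eventually (hU.mem_nhds hpU))
  obtain ⟨t, htU, ht⟩ := (hev.and self_mem_nhdsWithin).exists
  have hte : t • e ∈ vectorSpan ℝ (oppositeFacet P c v) := by
    have hmem := hUF _ htU (by rw [inner_add_right, hp.2, real_inner_smul_right, he, mul_zero,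
      add_zero])
    simpa using vsub_mem_vectorSpan ℝ hmem hp
  simpa [smul_smul, inv_mul_cancel₀ ht] using Submodule.smul_mem _ t⁻¹ hte

theorem affDim_oppositeFacet [FiniteDimensional ℝ E] {d : ℕ} (hrank : finrank ℝ E = d + 1)
    (hc : 0 < c) (hP : polarSet P = (-c) • P) (hPV : P = convexHull ℝ V) (hV : V.Finite)
    (hV1 : ∀ v ∈ V, ‖v‖ = 1) {v : E} (hv : v ∈ V) : affDim (oppositeFacet P c v) = d := by
  have : Fact (finrank ℝ E = d + 1) := ⟨hrank⟩
  rw [affDim, direction_affineSpan, vectorSpan_oppositeFacet hc hP hPV hV hV1 hv,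
    Submodule.finrank_orthogonal_span_singleton (n := d) (norm_ne_zero_iff.1 (by simp [hV1 v hv]))]

theorem oppositeFacet_injOn (hc : 0 < c) (hP : polarSet P = (-c) • P)
    (hball : P ⊆ closedBall 0 1) (hV1 : ∀ v ∈ V, ‖v‖ = 1) : InjOn (oppositeFacet P c) V := by
  intro v hv w hw hvw
  have hp := neg_inv_smul_mem_oppositeFacet hc hP hball (hV1 v hv)
  rw [hvw] at hp
  have hwv : ⟪w, v⟫ = 1 := by
    have h := hp.2
    rw [real_inner_smul_right] at h
    exact mul_left_cancel₀ (neg_ne_zero.2 (inv_ne_zero hc.ne')) (h.trans (mul_one _).symm)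
  exact ((inner_eq_one_iff_of_norm_eq_one (𝕜 := ℝ) (hV1 w hw) (hV1 v hv)).1 hwv).symm

theorem exists_mem_forall_inner_eq_of_isExposed [CompleteSpace E] (hc : 0 < c)
    (hP : polarSet P = (-c) • P) (hball : P ⊆ closedBall 0 1) {F : Set E}
    (hF : IsExposed ℝ P F) (hne : F.Nonempty) (hFP : F ≠ P) :
    ∃ q ∈ P, ∀ x ∈ F, ⟪q, x⟫ = -c⁻¹ := by
  obtain ⟨l, hl⟩ := hF hne
  set u := (InnerProductSpace.toDual ℝ E).symm l
  have hlu : ∀ x, l x = ⟪u, x⟫ := fun x => InnerProductSpace.toDual_symm_apply.symm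
  simp only [hlu] at hl
  obtain ⟨x₀, hx₀⟩ := hne
  have hmax : ∀ x ∈ F, ∀ y ∈ P, ⟪u, y⟫ ≤ ⟪u, x⟫ := fun x hx => by
    rw [hl] at hx; exact hx.2
  have hu : u ≠ 0 := by
    rintro hu
    exact hFP (by simp [hl, hu])
  have hM : 0 < ⟪u, x₀⟫ := by
    have hy : (c⁻¹ / ‖u‖) • u ∈ P := closedBall_inv_subset_of_polarSet_eq hc hP hball (by
      simp [norm_smul, abs_of_pos hc, norm_ne_zero_iff.2 hu])
    have hpos : 0 < ⟪u, (c⁻¹ / ‖u‖) • u⟫ := by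
      rw [real_inner_smul_right, real_inner_self_eq_norm_sq]
      have := norm_pos_iff.2 hu
      positivity
    exact hpos.trans_le (hmax x₀ hx₀ _ hy)
  have hpol : ⟪u, x₀⟫⁻¹ • u ∈ polarSet P := fun y hy => by
    rw [real_inner_smul_right, real_inner_comm u y, inv_mul_le_one₀ hM]
    exact hmax x₀ hx₀ y hy
  rw [hP] at hpol
  obtain ⟨q, hq, hqu⟩ := hpol
  refine ⟨q, hq, fun x hx => ?_⟩
  have hx' : ⟪u, x⟫ = ⟪u, x₀⟫ :=
    le_antisymm (hmax x₀ hx₀ x (hF.subset hx)) (hmax x hx x₀ (hF.subset hx₀))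
  have h := congrArg (fun y => ⟪y, x⟫) hqu
  simp only [real_inner_smul_left, hx', inv_mul_cancel₀ hM.ne'] at h
  field_simp
  linarith

theorem setOf_isFaceOfDim_eq_image_oppositeFacet [FiniteDimensional ℝ E] {d : ℕ}
    (hrank : finrank ℝ E = d + 1) (hPdim : affDim P = d + 1) (hc : 0 < c)
    (hP : polarSet P = (-c) • P) (hPV : P = convexHull ℝ V) (hV : V.Finite)
    (hV1 : ∀ v ∈ V, ‖v‖ = 1) : {F | IsFaceOfDim P F d} = oppositeFacet P c '' V := by
  have hball : P ⊆ closedBall 0 1 := hPV ▸ convexHull_subset_closedBall_one hV1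
  have hVP : V ⊆ P := hPV ▸ subset_convexHull ℝ V
  ext F
  constructor
  · rintro ⟨hF, hne, hdim⟩
    obtain ⟨q, hq, hqF⟩ := exists_mem_forall_inner_eq_of_isExposed hc hP hball hF hne
      (by rintro rfl; omega)
    obtain ⟨w, hw, hwF⟩ := exists_forall_inner_eq_of_mem_convexHull (hPV ▸ hq)
      (fun w hw x hx => neg_inv_le_inner_of_polarSet_eq hc hP (hVP hw) (hF.subset hx)) hqF
    have hFw : F ⊆ oppositeFacet P c w := fun x hx => ⟨hF.subset hx, hwF x hx⟩
    refine ⟨w, hw, (hF.eq_of_subset_of_affDim_eq hne hFw (fun x hx => hx.1) ?_).symm⟩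
    rw [hdim, affDim_oppositeFacet hrank hc hP hPV hV hV1 hw]
  · rintro ⟨v, hv, rfl⟩
    exact ⟨isExposed_oppositeFacet hc hP hball (hVP hv) (hV1 v hv),
      nonempty_of_mem (neg_inv_smul_mem_oppositeFacet hc hP hball (hV1 v hv)),
      affDim_oppositeFacet hrank hc hP hPV hV hV1 hv⟩

theorem diam_eq_of_polarSet_eq (hc : 0 < c) (hP : polarSet P = (-c) • P)
    (hPV : P = convexHull ℝ V) (hV : V.Finite) (hV1 : ∀ v ∈ V, ‖v‖ = 1) (hVne : V.Nonempty) :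
    diam P = √(2 + 2 * c⁻¹) := by
  have hball : P ⊆ closedBall 0 1 := hPV ▸ convexHull_subset_closedBall_one hV1
  have hcpt : IsCompact P := hPV ▸ hV.isCompact_convexHull ℝ
  refine le_antisymm (diam_le_of_forall_dist_le (Real.sqrt_nonneg _) fun x hx y hy => ?_) ?_
  · have hx1 : ‖x‖ ≤ 1 := by simpa using hball hx
    have hy1 : ‖y‖ ≤ 1 := by simpa using hball hy
    have hxy := neg_inv_le_inner_of_polarSet_eq hc hP hx hy
    rw [Real.le_sqrt dist_nonneg (by positivity), dist_eq_norm, norm_sub_sq_real]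
    nlinarith [norm_nonneg x, norm_nonneg y]
  · obtain ⟨v, hv⟩ := hVne
    have hvP : v ∈ P := hPV ▸ subset_convexHull ℝ V hv
    obtain ⟨w, hwext, hw⟩ := exists_extremePoint_mem_oppositeFacet hc hP hball hcpt hvP (hV1 v hv)
    have hwV : w ∈ V := extremePoints_convexHull_subset (hPV ▸ hwext)
    calc √(2 + 2 * c⁻¹) = dist v w := by
          rw [dist_eq_sqrt_of_norm_eq_one (hV1 v hv) (hV1 w hwV), hw.2]
          ring_nf
      _ ≤ diam P := dist_le_diam_of_mem hcpt.isBounded hvP hw.1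

theorem dist_eq_diam_iff (hc : 0 < c) (hP : polarSet P = (-c) • P)
    (hPV : P = convexHull ℝ V) (hV : V.Finite) (hV1 : ∀ v ∈ V, ‖v‖ = 1) {v w : E} (hv : v ∈ V)
    (hw : w ∈ V) : dist v w = diam P ↔ ⟪v, w⟫ = -c⁻¹ := by
  have hvw : ⟪v, w⟫ ≤ 1 := by
    simpa [hV1 v hv, hV1 w hw] using real_inner_le_norm v w
  rw [dist_eq_sqrt_of_norm_eq_one (hV1 v hv) (hV1 w hw),
    diam_eq_of_polarSet_eq hc hP hPV hV hV1 ⟨v, hv⟩,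
    Real.sqrt_inj (by linarith) (by positivity)]
  constructor <;> intro h <;> linarith

theorem ne_of_inner_eq_neg_inv (hc : 0 < c) {v w : E} (hv1 : ‖v‖ = 1) (h : ⟪v, w⟫ = -c⁻¹) :
    v ≠ w := by
  rintro rfl
  rw [real_inner_self_eq_norm_sq, hv1] at h
  linarith [inv_pos.2 hc]

theorem fPair_zero_eq_ncard_setOf_inner_eq [FiniteDimensional ℝ E] {d : ℕ}
    (hrank : finrank ℝ E = d + 1) (hPdim : affDim P = d + 1) (hc : 0 < c)
    (hP : polarSet P = (-c) • P) (hPV : P = convexHull ℝ (extremePoints ℝ P))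
    (hV : (extremePoints ℝ P).Finite) (hV1 : ∀ v ∈ extremePoints ℝ P, ‖v‖ = 1) :
    fPair P 0 d = {q : E × E | q.1 ∈ extremePoints ℝ P ∧ q.2 ∈ extremePoints ℝ P ∧
      ⟪q.1, q.2⟫ = -c⁻¹}.ncard := by
  have hball : P ⊆ closedBall 0 1 := hPV ▸ convexHull_subset_closedBall_one hV1
  rw [fPair_zero_eq_ncard (setOf_isFaceOfDim_zero hball hV1)
    (setOf_isFaceOfDim_eq_image_oppositeFacet hrank hPdim hc hP hPV hV hV1)
    (oppositeFacet_injOn hc hP hball hV1)]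
  congr 1
  ext ⟨v, w⟩
  simp only [oppositeFacet, mem_ofPred_eq, real_inner_comm v w]
  exact ⟨fun ⟨hv, hw, _, h⟩ => ⟨hv, hw, h⟩, fun ⟨hv, hw, h⟩ => ⟨hv, hw, hv.1, h⟩⟩

theorem diamEdges_eq_setOf_inner_eq (hc : 0 < c) (hP : polarSet P = (-c) • P)
    (hPV : P = convexHull ℝ (extremePoints ℝ P)) (hV : (extremePoints ℝ P).Finite)
    (hV1 : ∀ v ∈ extremePoints ℝ P, ‖v‖ = 1) :
    diamEdges P = {e | ∃ v w, (v ∈ extremePoints ℝ P ∧ w ∈ extremePoints ℝ P ∧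
      ⟪v, w⟫ = -c⁻¹) ∧ e = {v, w}} := by
  ext e
  constructor
  · rintro ⟨v, w, hv, hw, -, hvw, rfl⟩
    exact ⟨v, w, ⟨hv, hw, (dist_eq_diam_iff hc hP hPV hV hV1 hv hw).1 hvw⟩, rfl⟩
  · rintro ⟨v, w, ⟨hv, hw, hvw⟩, rfl⟩
    exact ⟨v, w, hv, hw, ne_of_inner_eq_neg_inv hc (hV1 v hv) hvw,
      (dist_eq_diam_iff hc hP hPV hV hV1 hv hw).2 hvw, rfl⟩

end AntiSelfPolar

/-- For an anti-self-polar polytope `P` of dimension `d + 1`,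
`f₀d(P) = 2·e(G(P))`, where `e(G(P))` is the number of edges of the diameter graph. -/
theorem fPair_eq_two_mul_diamEdges {d : ℕ} (P : Set (EuclideanSpace ℝ (Fin (d + 1))))
    (hpoly : IsPolytope P) (hdim : affDim P = d + 1) (hasp : IsAntiSelfPolar P) :
    fPair P 0 d = 2 * (diamEdges P).ncard := by
  obtain ⟨hV1, c, hc, hP⟩ := hasp
  have hV := hpoly.finite_extremePoints
  have hPV := hpoly.convexHull_extremePoints.symm
  rw [fPair_zero_eq_ncard_setOf_inner_eq finrank_euclideanSpace_fin hdim hc hP hPV hV hV1,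
    diamEdges_eq_setOf_inner_eq hc hP hPV hV hV1]
  exact ncard_setOf_rel_eq_two_mul_ncard_pairs
    (r := fun v w => v ∈ extremePoints ℝ P ∧ w ∈ extremePoints ℝ P ∧ ⟪v, w⟫ = -c⁻¹)
    (fun v w ⟨hv, hw, h⟩ => ⟨hw, hv, real_inner_comm v w ▸ h⟩)
    (fun v ⟨hv, _, h⟩ => ne_of_inner_eq_neg_inv hc (hV1 v hv) h rfl)
    ((hV.prod hV).subset fun q hq => ⟨hq.1, hq.2.1⟩)
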